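/- arXiv:1901.03101 — 2 statements merged into one kernel-verified Lean document; each statement's English description precedes it below -/
import Mathlib

section
/- Let G be a finitely generated pro-p group of positive rank gradient, with a filtration series S: (G_i). (1) If H ≤ G is a finitely generated closed subgroup with |G : H| = ∞, then lim_{i→∞} d(H ∩ G_i)/d(G_i) = 0. (2) If H ≤ G is an infinite closed subgroup, then lim_{i→∞} d(H G_i)/d(G_i) = 0. -/
open scoped Pointwise commutatorElement
open Filter Topology

/-- A pro-`p` group: a compact, Hausdorff, totally disconnected topological group in which
every open normal subgroup has index a power of `p`. -/
def IsProPGroup (p : ℕ) (G : Type*) [Group G] [TopologicalSpace G] [IsTopologicalGroup G] : Prop :=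
  CompactSpace G ∧ T2Space G ∧ TotallyDisconnectedSpace G ∧
    ∀ U : Subgroup G, U.Normal → IsOpen (U : Set G) → ∃ n : ℕ, U.index = p ^ n

/-- A subgroup `H` of a topological group is topologically finitely generated:
there is a finite subset of `H` whose closed subgroup closure is `H`. -/
def TopFG {G : Type*} [Group G] [TopologicalSpace G] (H : Subgroup G) : Prop :=
  ∃ S : Finset G, (S : Set G) ⊆ (H : Set G) ∧
    closure ((Subgroup.closure (S : Set G) : Subgroup G) : Set G) = (H : Set G)

/-- The minimal number of topological generators `d(H)` of a subgroup `H`. -/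
noncomputable def topRank {G : Type*} [Group G] [TopologicalSpace G] (H : Subgroup G) : ℕ :=
  sInf {n : ℕ | ∃ S : Finset G, S.card = n ∧ (S : Set G) ⊆ (H : Set G) ∧
    closure ((Subgroup.closure (S : Set G) : Subgroup G) : Set G) = (H : Set G)}

/-- The rank gradient `RG(G) = inf over open subgroups H of (d(H)-1)/|G:H|`. -/
noncomputable def rankGradient (G : Type*) [Group G] [TopologicalSpace G] : ℝ :=
  sInf {x : ℝ | ∃ H : Subgroup G, IsOpen (H : Set G) ∧
    x = ((topRank H : ℝ) - 1) / (H.index : ℝ)}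

/-- A filtration series: a descending chain of open normal subgroups, starting at `G`,
with trivial intersection. -/
def IsFiltrationSeries {G : Type*} [Group G] [TopologicalSpace G] (S : ℕ → Subgroup G) : Prop :=
  S 0 = ⊤ ∧ (∀ i, S (i + 1) ≤ S i) ∧ (∀ i, (S i).Normal) ∧
    (∀ i, IsOpen ((S i : Subgroup G) : Set G)) ∧ (⨅ i, S i) = ⊥

/-- The Hausdorff dimension of `H ≤ G` with respect to a series `S`:
`liminf_i log_p |H S_i : S_i| / log_p |G : S_i|`; here `|H S_i : S_i| = |H : H ∩ S_i|`
is the relative index. -/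
noncomputable def hDim (p : ℕ) {G : Type*} [Group G] (S : ℕ → Subgroup G) (H : Subgroup G) : ℝ :=
  Filter.liminf
    (fun i => Real.logb (p : ℝ) (((S i).relIndex H : ℝ)) /
      Real.logb (p : ℝ) (((S i).index : ℝ))) Filter.atTop

/-- The Hausdorff spectrum: all values of `hDim` over closed subgroups. -/
noncomputable def hSpectrum (p : ℕ) (G : Type*) [Group G] [TopologicalSpace G]
    (S : ℕ → Subgroup G) : Set ℝ :=
  {x | ∃ H : Subgroup G, IsClosed (H : Set G) ∧ hDim p S H = x}

/-- The normal Hausdorff spectrum: all values of `hDim` over closed normal subgroups. -/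
noncomputable def hSpectrumNormal (p : ℕ) (G : Type*) [Group G] [TopologicalSpace G]
    (S : ℕ → Subgroup G) : Set ℝ :=
  {x | ∃ H : Subgroup G, IsClosed (H : Set G) ∧ H.Normal ∧ hDim p S H = x}

/-- The Frattini series `Φ_0(G) = G`, `Φ_i(G) = [Φ_{i-1}(G),Φ_{i-1}(G)] Φ_{i-1}(G)^p`
(taking closed subgroup generation). -/
noncomputable def frattiniSeries (p : ℕ) (G : Type*) [Group G] [TopologicalSpace G]
    [IsTopologicalGroup G] : ℕ → Subgroup G
  | 0 => ⊤
  | (i + 1) =>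
      (Subgroup.closure
        ({x | ∃ a ∈ frattiniSeries p G i, ∃ b ∈ frattiniSeries p G i, x = ⁅a, b⁆} ∪
         {x | ∃ a ∈ frattiniSeries p G i, x = a ^ p})).topologicalClosure

/-- `Z` is the Zassenhaus series of `G`: `Z_1(G) = G` and
`Z_i(G) = Z_{⌈i/p⌉}(G)^p ∏_{1 ≤ j < i} [Z_j(G), Z_{i-j}(G)]` for `i ≥ 2`. -/
def IsZassenhausSeries (p : ℕ) {G : Type*} [Group G] [TopologicalSpace G] [IsTopologicalGroup G]
    (Z : ℕ → Subgroup G) : Prop :=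
  Z 1 = ⊤ ∧ ∀ i, 2 ≤ i → Z i =
    (Subgroup.closure
      ({x | ∃ a ∈ Z ((i + p - 1) / p), x = a ^ p} ∪
       {x | ∃ j, 1 ≤ j ∧ j < i ∧ ∃ a ∈ Z j, ∃ b ∈ Z (i - j), x = ⁅a, b⁆})).topologicalClosure

/-- A free pro-`p` group on a finite (topological) generating set, characterised by the
universal property with respect to continuous homomorphisms into pro-`p` groups. -/
def IsFreeProP (p : ℕ) (G : Type*) [Group G] [TopologicalSpace G] [IsTopologicalGroup G] : Prop :=
  IsProPGroup p G ∧
  ∃ X : Finset G,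
    closure ((Subgroup.closure (X : Set G) : Subgroup G) : Set G) = Set.univ ∧
    ∀ (H : Type) [Group H] [TopologicalSpace H] [IsTopologicalGroup H],
      IsProPGroup p H → ∀ f : G → H, ∃! φ : G →* H, Continuous φ ∧ ∀ x ∈ X, φ x = f x

/-- Continuous (i.e. locally constant) homomorphisms `G → F_p`; these are exactly the
elements of `H¹(G, F_p)`. -/
def IsHom1 (p : ℕ) {G : Type*} [Group G] [TopologicalSpace G] (a : G → ZMod p) : Prop :=
  IsLocallyConstant a ∧ ∀ x y : G, a (x * y) = a x + a y

/-- Continuous 2-cocycles on `G` with values in `F_p` (trivial action). -/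
def IsCocycle2 (p : ℕ) {G : Type*} [Group G] [TopologicalSpace G] (f : G × G → ZMod p) : Prop :=
  IsLocallyConstant f ∧ ∀ x y z : G, f (x * y, z) + f (x, y) = f (x, y * z) + f (y, z)

/-- Continuous 2-coboundaries on `G` with values in `F_p` (trivial action). -/
def IsCoboundary2 (p : ℕ) {G : Type*} [Group G] [TopologicalSpace G]
    (f : G × G → ZMod p) : Prop :=
  ∃ c : G → ZMod p, IsLocallyConstant c ∧ ∀ x y : G, f (x, y) = c x - c (x * y) + c y

/-- A Demushkin pro-`p` group: a Poincaré duality pro-`p` group of dimension 2, via the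
standard cohomological characterisation: `H¹(G,F_p)` is finite, `H²(G,F_p)` is
one-dimensional, and the cup product pairing `H¹ × H¹ → H²` is non-degenerate. -/
def IsDemushkin (p : ℕ) (G : Type*) [Group G] [TopologicalSpace G] [IsTopologicalGroup G] : Prop :=
  IsProPGroup p G ∧
  {a : G → ZMod p | IsHom1 p a}.Finite ∧
  (∃ f₀ : G × G → ZMod p, IsCocycle2 p f₀ ∧ ¬ IsCoboundary2 p f₀ ∧
    ∀ f : G × G → ZMod p, IsCocycle2 p f → ∃ k : ZMod p, IsCoboundary2 p (f - k • f₀)) ∧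
  (∀ a : G → ZMod p, IsHom1 p a → a ≠ 0 →
    (∃ b : G → ZMod p, IsHom1 p b ∧ ¬ IsCoboundary2 p (fun q => a q.1 * b q.2)) ∧
    (∃ b : G → ZMod p, IsHom1 p b ∧ ¬ IsCoboundary2 p (fun q => b q.1 * a q.2)))

/-- The verbal subgroup of (the subgroup) `H` determined by a set `W` of group words. -/
def verbalIn {G : Type*} [Group G] (H : Subgroup G) (W : Set (FreeGroup ℕ)) : Subgroup G :=
  Subgroup.closure {x | ∃ w ∈ W, ∃ ν : ℕ → G, (∀ n, ν n ∈ H) ∧ x = FreeGroup.lift ν w}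

/-- An iterated verbal filtration: a filtration series in which each term is a verbal
subgroup of the preceding one. -/
def IsIteratedVerbalFiltration {G : Type*} [Group G] [TopologicalSpace G]
    (S : ℕ → Subgroup G) : Prop :=
  IsFiltrationSeries S ∧ ∀ i, ∃ W : Set (FreeGroup ℕ), S (i + 1) = verbalIn (S i) W

/-- `K` is subnormal in `G` via (topologically) finitely generated successive quotients:
there is a chain `G = C_0 ⊵ C_1 ⊵ ... ⊵ C_s = K` of closed subgroups, each normal in the
preceding one, such that each `C_{i-1}` is topologically generated by `C_i` together with
finitely many elements (i.e. each quotient `C_{i-1}/C_i` is topologically finitely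
generated). -/
def SubnormalViaFGQuotients {G : Type*} [Group G] [TopologicalSpace G] (K : Subgroup G) : Prop :=
  ∃ (s : ℕ) (C : ℕ → Subgroup G), C 0 = ⊤ ∧ C s = K ∧
    ∀ i < s, IsClosed ((C (i + 1) : Subgroup G) : Set G) ∧ C (i + 1) ≤ C i ∧
      ((C (i + 1)).subgroupOf (C i)).Normal ∧
      ∃ S : Finset G, (S : Set G) ⊆ (C i : Set G) ∧
        closure ((Subgroup.closure ((S : Set G) ∪ (C (i + 1) : Set G)) : Subgroup G) : Set G)
          = ((C i : Subgroup G) : Set G)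

/-- The rank gradient of the quotient `G/N`, for `N` a normal subgroup. -/
noncomputable def quotientRankGradient {G : Type*} [Group G] [TopologicalSpace G]
    (N : Subgroup G) (hN : N.Normal) : ℝ :=
  letI := hN
  rankGradient (G ⧸ N)

/-! Positive rank gradient gives `d(G_i) ≥ RG(G) |G : G_i| + 1`, and
`|G : G_i| = |H : H ∩ G_i| |G : H G_i|`. Schreier's bound, which survives passing to closures
because `G_i` is open, gives `d(H ∩ G_i) ≤ |H : H ∩ G_i| d(H)` and
`d(H G_i) ≤ |G : H G_i| d(G)`.
So the two ratios are at most `d(H) / (RG(G) |G : H G_i|)` and `d(G) / (RG(G) |H : H ∩ G_i|)`,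
and these indices tend to infinity: the `H G_i` decrease to the closed subgroup `H` of infinite
index, and the `H ∩ G_i` decrease to the trivial subgroup of the infinite group `H`. -/

section TopRank

variable {G : Type*} [Group G] [TopologicalSpace G]

theorem topRank_le_card {H : Subgroup G} (T : Finset G)
    (hT : closure ((Subgroup.closure (T : Set G) : Subgroup G) : Set G) = H) :
    topRank H ≤ T.card :=
  Nat.sInf_le ⟨T, rfl, hT ▸ Subgroup.subset_closure.trans subset_closure, hT⟩

theorem rankGradient_le {U : Subgroup G} (hU : IsOpen (U : Set G)) :
    rankGradient G ≤ ((topRank U : ℝ) - 1) / U.index := by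
  refine csInf_le ⟨-1, ?_⟩ ⟨U, hU, rfl⟩
  rintro x ⟨V, -, rfl⟩
  rcases eq_or_ne V.index 0 with h | h
  · simp [h]
  · have hV : (1 : ℝ) ≤ V.index := by exact_mod_cast Nat.one_le_iff_ne_zero.mpr h
    rw [le_div_iff₀ (by positivity)]
    nlinarith [(topRank V).cast_nonneg (α := ℝ)]

theorem rankGradient_mul_index_add_one_le {U : Subgroup G} (hU : IsOpen (U : Set G))
    (hU₀ : U.index ≠ 0) :
    rankGradient G * U.index + 1 ≤ topRank U := by
  have hpos : (0 : ℝ) < U.index := by exact_mod_cast Nat.pos_of_ne_zero hU₀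
  have := rankGradient_le hU
  rw [le_div_iff₀ hpos] at this
  linarith

end TopRank

theorem Subgroup.exists_finset_card_le_mul_closure_eq_inf {G : Type*} [Group G]
    (T : Finset G) (O : Subgroup G) (hO : O.relIndex (Subgroup.closure (T : Set G)) ≠ 0) :
    ∃ T' : Finset G, T'.card ≤ O.relIndex (Subgroup.closure (T : Set G)) * T.card ∧
      Subgroup.closure (T' : Set G) = O ⊓ Subgroup.closure (T : Set G) := by
  classical
  set A := Subgroup.closure (T : Set G)
  have : (O.subgroupOf A).FiniteIndex := ⟨hO⟩
  set TA : Finset A := T.preimage (↑) Subtype.coe_injective.injOn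
  have hTA : Subgroup.closure (TA : Set A) = ⊤ := by
    rw [Finset.coe_preimage]
    exact Subgroup.closure_closure_coe_preimage
  obtain ⟨R, hRcard, hR⟩ := Subgroup.exists_finset_card_le_mul (O.subgroupOf A) hTA
  set f : O.subgroupOf A →* G := A.subtype.comp (O.subgroupOf A).subtype
  refine ⟨R.image f, ?_, ?_⟩
  · calc (R.image f).card ≤ R.card := Finset.card_image_le
      _ ≤ (O.subgroupOf A).index * TA.card := hRcard
      _ ≤ O.relIndex A * T.card :=
        Nat.mul_le_mul_left _ (Finset.card_le_card_of_injOn (↑)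
          (fun a ha => Finset.mem_preimage.mp ha) Subtype.coe_injective.injOn)
  · rw [Finset.coe_image, ← MonoidHom.map_closure, hR, ← MonoidHom.range_eq_map,
      MonoidHom.range_comp, Subgroup.range_subtype, Subgroup.subgroupOf_map_subtype]

theorem topRank_inf_le {G : Type*} [Group G] [TopologicalSpace G] [IsTopologicalGroup G]
    (T : Finset G) {B O : Subgroup G}
    (hT : closure ((Subgroup.closure (T : Set G) : Subgroup G) : Set G) = B)
    (hO : IsOpen (O : Set G)) (hOB : O.relIndex B ≠ 0) :
    topRank (B ⊓ O) ≤ O.relIndex B * T.card := by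
  set A := Subgroup.closure (T : Set G)
  have hAB : A ≤ B := fun x hx => by rw [← SetLike.mem_coe, ← hT]; exact subset_closure hx
  obtain ⟨T', hcard, hT'⟩ := Subgroup.exists_finset_card_le_mul_closure_eq_inf T O
    (fun h => hOB (Subgroup.relIndex_eq_zero_of_le_right hAB h))
  refine (topRank_le_card T' ?_).trans
    (hcard.trans (Nat.mul_le_mul_right _ (Subgroup.relIndex_le_of_le_right hAB hOB)))
  have hOcl : IsClosed (O : Set G) := O.isClosed_of_isOpen hO
  rw [hT', Subgroup.coe_inf, Subgroup.coe_inf, ← hT, Set.inter_comm (O : Set G)]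
  refine subset_antisymm ?_ hO.closure_inter
  exact (closure_inter_subset_inter_closure _ _).trans (by rw [hOcl.closure_eq])

theorem Subgroup.tendsto_index_atTop_of_antitone {G : Type*} [Group G] {K : ℕ → Subgroup G}
    (hK : Antitone K) (hK₀ : ∀ i, (K i).index ≠ 0) (hne : ∀ N, ∃ i ≥ N, K i ≠ K N) :
    Tendsto (fun i => (K i).index) atTop atTop := by
  have hmono : Monotone fun i => (K i).index := fun i j hij =>
    have := Subgroup.finiteIndex_iff.mpr (hK₀ j)
    Subgroup.index_antitone (hK hij)
  refine tendsto_atTop_atTop_of_monotone' hmono fun hbdd => ?_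
  obtain ⟨N, hN⟩ := Nat.sSup_mem (Set.range_nonempty _) hbdd
  obtain ⟨i, hi, hKi⟩ := hne N
  have := Subgroup.finiteIndex_iff.mpr (hK₀ i)
  have hlt : (K N).index < (K i).index := Subgroup.index_strictAnti (lt_of_le_of_ne (hK hi) hKi)
  exact hlt.not_ge ((le_csSup hbdd (Set.mem_range_self i)).trans_eq hN.symm)

theorem Subgroup.tendsto_relIndex_atTop {G : Type*} [Group G] {S : ℕ → Subgroup G}
    (hS : Antitone S) (hbot : ⨅ i, S i = ⊥) {H : Subgroup G} (hSH : ∀ i, (S i).relIndex H ≠ 0)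
    (hH : (H : Set G).Infinite) :
    Tendsto (fun i => (S i).relIndex H) atTop atTop := by
  refine Subgroup.tendsto_index_atTop_of_antitone
    (fun i j hij => Subgroup.subgroupOf_mono _ (hS hij)) hSH fun N => ?_
  by_contra! hconst
  have hbotN : (S N).subgroupOf H = ⊥ := by
    refine (Subgroup.eq_bot_iff_forall _).mpr fun x hx =>
      Subtype.ext (Subgroup.mem_bot.mp ?_)
    rw [← hbot, Subgroup.mem_iInf]
    intro i
    rcases le_total i N with hi | hi
    · exact hS hi hx
    · rw [← hconst i hi] at hx
      exact hx
  have hfin := hSH N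
  rw [Subgroup.relIndex, hbotN, Subgroup.index_bot] at hfin
  exact hH (Set.finite_coe_iff.mp (Nat.finite_of_card_ne_zero hfin))

section Filtration

variable {G : Type*} [Group G] [TopologicalSpace G] [CompactSpace G] {S : ℕ → Subgroup G}

theorem eventually_subset_of_mem_nhds_one (hS : Antitone S)
    (hclosed : ∀ i, IsClosed (S i : Set G)) (hbot : ⨅ i, S i = ⊥) {U : Set G} (hU : U ∈ 𝓝 1) :
    ∀ᶠ i in atTop, (S i : Set G) ⊆ U := by
  have hdisj : (interior U)ᶜ ∩ ⋂ i, (S i : Set G) = ∅ := by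
    rw [← Subgroup.coe_iInf, hbot, Subgroup.coe_bot, Set.inter_singleton_eq_empty,
      Set.notMem_compl_iff]
    exact mem_interior_iff_mem_nhds.mpr hU
  obtain ⟨N, hN⟩ := isOpen_interior.isClosed_compl.isCompact.elim_directed_family_closed _
    hclosed hdisj (directed_of_isDirected_le fun i j hij => hS hij)
  refine eventually_atTop.mpr ⟨N, fun i hi x hx => interior_subset ?_⟩
  by_contra hxU
  exact (Set.eq_empty_iff_forall_notMem.mp hN) x ⟨hxU, hS hi hx⟩

variable [IsTopologicalGroup G]

theorem Subgroup.index_ne_zero_of_isOpen {U : Subgroup G} (hU : IsOpen (U : Set G)) :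
    U.index ≠ 0 :=
  have := Subgroup.quotient_finite_of_isOpen U hU
  Subgroup.index_ne_zero_of_finite

theorem mem_closure_of_eventually_mem_sup (hS : Antitone S) (hnormal : ∀ i, (S i).Normal)
    (hclosed : ∀ i, IsClosed (S i : Set G)) (hbot : ⨅ i, S i = ⊥) {H : Subgroup G} {x : G}
    (hx : ∀ᶠ i in atTop, x ∈ H ⊔ S i) : x ∈ closure (H : Set G) := by
  refine mem_closure_iff_nhds_one.mpr fun U hU => ?_
  obtain ⟨i, hxi, hiU⟩ :=
    (hx.and (eventually_subset_of_mem_nhds_one hS hclosed hbot hU)).exists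
  have hxi' : x ∈ ((S i ⊔ H : Subgroup G) : Set G) := sup_comm H (S i) ▸ hxi
  rw [Subgroup.normal_mul] at hxi'
  obtain ⟨s, hs, h, hh, rfl⟩ := hxi'
  exact ⟨h, hh, hiU (by simpa [div_eq_mul_inv] using (S i).inv_mem hs)⟩

theorem tendsto_index_sup_atTop (hS : Antitone S) (hnormal : ∀ i, (S i).Normal)
    (hopen : ∀ i, IsOpen (S i : Set G)) (hbot : ⨅ i, S i = ⊥) {H : Subgroup G}
    (hH : IsClosed (H : Set G)) (hHindex : H.index = 0) :
    Tendsto (fun i => (H ⊔ S i).index) atTop atTop := by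
  refine Subgroup.tendsto_index_atTop_of_antitone (fun i j hij => sup_le_sup_left (hS hij) H)
    (fun i => Subgroup.index_ne_zero_of_isOpen (Subgroup.isOpen_mono le_sup_right (hopen i)))
    fun N => ?_
  by_contra! hconst
  have hle : H ⊔ S N ≤ H := fun x hx => by
    rw [← SetLike.mem_coe, ← hH.closure_eq]
    refine mem_closure_of_eventually_mem_sup hS hnormal
      (fun i => (S i).isClosed_of_isOpen (hopen i)) hbot (eventually_atTop.mpr ⟨N, ?_⟩)
    intro i hi
    rwa [hconst i hi]
  exact Subgroup.index_ne_zero_of_isOpen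
    (Subgroup.isOpen_mono (le_sup_right.trans hle) (hopen N)) hHindex

end Filtration

theorem Subgroup.index_eq_relIndex_mul_index_sup {G : Type*} [Group G] (N H : Subgroup G)
    [N.Normal] : N.index = N.relIndex H * (H ⊔ N).index := by
  rw [← Subgroup.relIndex_mul_index (le_sup_right : N ≤ H ⊔ N), Subgroup.relIndex_sup_right]

theorem tendsto_div_nhds_zero_of_le {r c : ℝ} (hr : 0 < r) {n d m w : ℕ → ℕ}
    (hw : Tendsto w atTop atTop) (hm : ∀ i, m i ≠ 0) (hn : ∀ i, (n i : ℝ) ≤ m i * c)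
    (hd : ∀ i, r * (m i * w i) + 1 ≤ d i) :
    Tendsto (fun i => (n i : ℝ) / d i) atTop (𝓝 0) := by
  have hbound : Tendsto (fun i => c / (r * w i)) atTop (𝓝 0) :=
    tendsto_const_nhds.div_atTop ((tendsto_natCast_atTop_atTop.comp hw).const_mul_atTop hr)
  refine squeeze_zero' (Eventually.of_forall fun i => by positivity) ?_ hbound
  filter_upwards [hw.eventually_gt_atTop 0] with i hwi
  have hmi : (0 : ℝ) < m i := by exact_mod_cast Nat.pos_of_ne_zero (hm i)
  have hwi : (0 : ℝ) < w i := by exact_mod_cast hwi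
  calc (n i : ℝ) / d i ≤ m i * c / (r * (m i * w i)) :=
        div_le_div₀ ((n i).cast_nonneg.trans (hn i)) (hn i) (by positivity) (by linarith [hd i])
    _ = c / (r * w i) := by field_simp

theorem statement9_general (p : ℕ) (G : Type*) [Group G] [TopologicalSpace G]
    [IsTopologicalGroup G] (hG : IsProPGroup p G) (hfg : TopFG (⊤ : Subgroup G))
    (hrg : 0 < rankGradient G) (S : ℕ → Subgroup G) (hS : IsFiltrationSeries S) :
    (∀ H : Subgroup G, IsClosed (H : Set G) → TopFG H → H.index = 0 →
      Filter.Tendsto (fun i => (topRank (H ⊓ S i) : ℝ) / (topRank (S i) : ℝ))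
        Filter.atTop (nhds 0)) ∧
    (∀ H : Subgroup G, IsClosed (H : Set G) → (H : Set G).Infinite →
      Filter.Tendsto (fun i => (topRank (H ⊔ S i) : ℝ) / (topRank (S i) : ℝ))
        Filter.atTop (nhds 0)) := by
  have : CompactSpace G := hG.1
  obtain ⟨-, hSsucc, hSnormal, hSopen, hSbot⟩ := hS
  have hSanti : Antitone S := antitone_nat_of_succ_le hSsucc
  have hsup_open (H : Subgroup G) (i : ℕ) : IsOpen ((H ⊔ S i : Subgroup G) : Set G) :=
    Subgroup.isOpen_mono le_sup_right (hSopen i)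
  have hrank (H : Subgroup G) (i : ℕ) :
      rankGradient G * ((S i).relIndex H * (H ⊔ S i).index) + 1 ≤ topRank (S i) := by
    have := rankGradient_mul_index_add_one_le (hSopen i)
      (Subgroup.index_ne_zero_of_isOpen (hSopen i))
    rwa [Subgroup.index_eq_relIndex_mul_index_sup (S i) H, Nat.cast_mul] at this
  have hSH (H : Subgroup G) (i : ℕ) : (S i).relIndex H ≠ 0 :=
    left_ne_zero_of_mul (Subgroup.index_eq_relIndex_mul_index_sup (S i) H ▸
      Subgroup.index_ne_zero_of_isOpen (hSopen i))
  constructor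
  · rintro H hH ⟨T, -, hT⟩ hHindex
    refine tendsto_div_nhds_zero_of_le (c := T.card) hrg
      (tendsto_index_sup_atTop hSanti hSnormal hSopen hSbot hH hHindex) (hSH H)
      (fun i => by exact_mod_cast topRank_inf_le T hT (hSopen i) (hSH H i)) (hrank H)
  · obtain ⟨T, -, hT⟩ := hfg
    intro H _ hH
    refine tendsto_div_nhds_zero_of_le (c := T.card) hrg
      (Subgroup.tendsto_relIndex_atTop hSanti hSbot (hSH H) hH)
      (fun i => Subgroup.index_ne_zero_of_isOpen (hsup_open H i)) (fun i => ?_)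
      (fun i => mul_comm ((S i).relIndex H : ℝ) _ ▸ hrank H i)
    have := topRank_inf_le T hT (hsup_open H i)
      (by rw [Subgroup.relIndex_top_right]; exact Subgroup.index_ne_zero_of_isOpen (hsup_open H i))
    rw [top_inf_eq, Subgroup.relIndex_top_right] at this
    exact_mod_cast this

/-- **Lemma.** Let `G` be a finitely generated pro-`p` group of positive rank gradient with
a filtration series `S : (G_i)`. (1) If `H ≤ G` is a finitely generated closed subgroup of
infinite index, then `d(H ∩ G_i)/d(G_i) → 0`. (2) If `H ≤ G` is an infinite closed
subgroup, then `d(H G_i)/d(G_i) → 0`. -/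
theorem statement9 (p : ℕ) (hp : p.Prime) (G : Type*) [Group G] [TopologicalSpace G]
    [IsTopologicalGroup G] (hG : IsProPGroup p G) (hfg : TopFG (⊤ : Subgroup G))
    (hrg : 0 < rankGradient G) (S : ℕ → Subgroup G) (hS : IsFiltrationSeries S) :
    (∀ H : Subgroup G, IsClosed (H : Set G) → TopFG H → H.index = 0 →
      Filter.Tendsto (fun i => (topRank (H ⊓ S i) : ℝ) / (topRank (S i) : ℝ))
        Filter.atTop (nhds 0)) ∧
    (∀ H : Subgroup G, IsClosed (H : Set G) → (H : Set G).Infinite →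
      Filter.Tendsto (fun i => (topRank (H ⊔ S i) : ℝ) / (topRank (S i) : ℝ))
        Filter.atTop (nhds 0)) :=
  statement9_general p G hG hfg hrg S hS
end

section
/- Let G be a finitely generated infinite pro-p group, and let N ⊴ G be a finite normal subgroup. Then RG(G/N) = |N| · RG(G). -/
open scoped Pointwise commutatorElement
open Filter Topology

/-!
Write `π : G → G/N`. For an open subgroup `H` of `G`, `π H` needs at most `d(H)` generators and
`|G : H| ≤ |N| |G/N : π H|`, which gives `RG(G/N) ≤ |N| RG(G)`. Conversely, as `N` is finite, some
open subgroup `U` meets `N` trivially. For `Q` open in `G/N`, the open subgroup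
`K = π⁻¹(Q) ∩ U` maps isomorphically onto an open subgroup of `Q`, with
`|G : K| = |N| |G/N : π K|`; and by Schreier's formula `d(K) - 1 ≤ |H : K| (d(H) - 1)` the ratio
`(d - 1)/index` can only decrease when passing to an open subgroup. Hence `|N| RG(G) ≤ RG(G/N)`.

Schreier's formula in a pro-`p` group follows by descending from `H` to `K` through subgroups each
normal of index `p` in the previous one. At such a step, a generator `t` outside the subgroup gives
the transversal `1, t, …, t^(p-1)`, and `p - 1` of the resulting Schreier generators are trivial.
-/

section PGroup

variable {A : Type*} [Group A] {p : ℕ} [hp : Fact p.Prime]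

open Subgroup

theorem orderOf_mk_eq_of_index_eq_prime {B : Subgroup A} [B.Normal] (hB : B.index = p) {t : A}
    (ht : t ∉ B) : orderOf (t : A ⧸ B) = p := by
  have hcard : Nat.card (A ⧸ B) = p := by rw [← index_eq_card, hB]
  have ht1 : (t : A ⧸ B) ≠ 1 := by rwa [Ne, QuotientGroup.eq_one_iff]
  rw [← Nat.card_zpowers, zpowers_eq_top_of_prime_card hcard ht1, card_top, hcard]

theorem isComplement_image_pow_of_index_eq_prime [DecidableEq A] {B : Subgroup A} [B.Normal]
    (hB : B.index = p) {t : A} (ht : t ∉ B) :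
    IsComplement (B : Set A) ((Finset.range p).image (t ^ ·) : Set A) := by
  have horder := orderOf_mk_eq_of_index_eq_prime hB ht
  have : B.FiniteIndex := ⟨hB ▸ hp.out.ne_zero⟩
  classical
  rw [isComplement_iff_existsUnique_mul_inv_mem]
  intro g
  obtain ⟨i, hi, hgi⟩ := Finset.mem_image.mp <| horder ▸ mem_zpowers_iff_mem_range_orderOf.mp
    (mem_zpowers_of_prime_card (by rw [← index_eq_card, hB])
      (by rwa [Ne, QuotientGroup.eq_one_iff]) (g' := (g : A ⧸ B)))
  refine ⟨⟨t ^ i, Finset.mem_coe.mpr (Finset.mem_image_of_mem _ hi)⟩, ?_, ?_⟩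
  · change g * (t ^ i)⁻¹ ∈ B
    rw [← div_eq_mul_inv, ← QuotientGroup.eq_iff_div_mem]
    simpa using hgi.symm
  · rintro ⟨r, hr⟩ hgr
    obtain ⟨j, hj, rfl⟩ := Finset.mem_image.mp hr
    rw [SetLike.mem_coe, ← div_eq_mul_inv, ← QuotientGroup.eq_iff_div_mem] at hgr
    have := (horder ▸ pow_injOn_Iio_orderOf (x := (t : A ⧸ B))) (by simpa using hj)
      (by simpa using hi) (by simpa [hgr] using hgi.symm)
    simp [this]

theorem Subgroup.IsComplement.mul_inv_toRightFun_eq_one {B : Subgroup A} {R : Set A}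
    (hR : IsComplement (B : Set A) R) {r : A} (hr : r ∈ R) : r * (hR.toRightFun r : A)⁻¹ = 1 :=
  mul_inv_eq_one.mpr <| congrArg Subtype.val <|
    (isComplement_iff_existsUnique_mul_inv_mem.mp hR r).unique (y₁ := ⟨r, hr⟩) (by simp)
      (hR.mul_inv_toRightFun_mem r)

/-- Schreier's lemma; the Schreier generator of an element of `R * S` that already lies in `R`
is trivial, so the elements of `P` can be discarded. -/
theorem exists_closure_eq_card_add_le_of_isComplement [DecidableEq A] {B : Subgroup A}
    {R S P : Finset A} (hR : IsComplement (B : Set A) R) (hR1 : (1 : A) ∈ R)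
    (hS : closure (S : Set A) = ⊤) (hPRS : P ⊆ R * S) (hPR : P ⊆ R) :
    ∃ T : Finset A, (T : Set A) ⊆ B ∧ closure (T : Set A) = B ∧
      T.card + P.card ≤ R.card * S.card := by
  set φ : A → A := fun g => g * (hR.toRightFun g : A)⁻¹
  have hφB : ∀ g, φ g ∈ B := hR.mul_inv_toRightFun_mem
  refine ⟨((R * S) \ P).image φ, ?_, le_antisymm ((closure_le B).mpr ?_) ?_, ?_⟩
  iterate 2
    rw [Finset.coe_image]
    rintro - ⟨g, -, rfl⟩
    exact hφB g
  · rw [← closure_mul_image_eq hR hR1 hS, closure_le]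
    rintro - ⟨g, hg, rfl⟩
    by_cases hgP : g ∈ P
    · have : φ g = 1 := hR.mul_inv_toRightFun_eq_one (hPR hgP)
      change φ g ∈ _
      rw [this]
      exact one_mem _
    · refine subset_closure (Finset.mem_image_of_mem φ (Finset.mem_sdiff.mpr ⟨?_, hgP⟩))
      rwa [← Finset.mem_coe, Finset.coe_mul]
  · have := Finset.card_image_le (s := (R * S) \ P) (f := φ)
    have := Finset.card_sdiff_add_card_eq_card hPRS
    have := Finset.card_mul_le (s := R) (t := S)
    omega

theorem exists_closure_eq_card_add_le_of_index_eq_prime {B : Subgroup A} [B.Normal]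
    (hB : B.index = p) {S : Finset A} (hS : closure (S : Set A) = ⊤) :
    ∃ T : Finset A, (T : Set A) ⊆ B ∧ closure (T : Set A) = B ∧ T.card + p ≤ p * S.card + 1 := by
  classical
  obtain ⟨t, htS, htB⟩ : ∃ t ∈ S, t ∉ B := by
    by_contra! h
    have hBtop : B = ⊤ := top_le_iff.mp (hS ▸ (closure_le B).mpr h)
    simp [hBtop, hp.out.ne_one.symm] at hB
  have hpow_inj : Set.InjOn (fun i => (t : A ⧸ B) ^ i) (Set.Iio p) :=
    orderOf_mk_eq_of_index_eq_prime hB htB ▸ pow_injOn_Iio_orderOf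
  set R : Finset A := (Finset.range p).image (t ^ ·)
  have hR1 : (1 : A) ∈ R := Finset.mem_image.mpr ⟨0, by simp [hp.out.pos], pow_zero t⟩
  set P : Finset A := (Finset.range (p - 1)).image (fun i => t ^ i * t)
  have hPR : P ⊆ R := by
    simp only [P, R, Finset.image_subset_iff, Finset.mem_range, Finset.mem_image]
    exact fun i hi => ⟨i + 1, by omega, pow_succ t i⟩
  have hPRS : P ⊆ R * S := by
    simp only [P, Finset.image_subset_iff, Finset.mem_range]
    exact fun i hi => Finset.mul_mem_mul (Finset.mem_image_of_mem _ (by simp; omega)) htS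
  have hPcard : P.card = p - 1 := by
    rw [Finset.card_image_of_injOn, Finset.card_range]
    intro i hi j hj hij
    have := hpow_inj (x₁ := i + 1) (x₂ := j + 1) (by simp at hi ⊢; omega) (by simp at hj ⊢; omega)
      (by simpa [pow_succ] using congrArg ((↑) : A → A ⧸ B) hij)
    omega
  obtain ⟨T, hTB, hT, hcard⟩ := exists_closure_eq_card_add_le_of_isComplement (R := R)
    (isComplement_image_pow_of_index_eq_prime hB htB) hR1 hS hPRS hPR
  refine ⟨T, hTB, hT, ?_⟩
  have hRcard : R.card ≤ p := Finset.card_image_le.trans (Finset.card_range p).le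
  have := Nat.mul_le_mul_right S.card hRcard
  have := hp.out.one_lt
  omega

theorem exists_closure_eq_inf_card_add_le_of_relIndex_eq_prime (S : Finset A) {B : Subgroup A}
    [(B.subgroupOf (closure (S : Set A))).Normal] (hB : B.relIndex (closure (S : Set A)) = p) :
    ∃ T : Finset A, (T : Set A) ⊆ B ∧ closure (T : Set A) = B ⊓ closure (S : Set A) ∧
      T.card + p ≤ p * S.card + 1 := by
  classical
  set C := closure (S : Set A)
  set S' : Finset C := S.preimage C.subtype C.subtype_injective.injOn
  have hS' : closure (S' : Set C) = ⊤ := by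
    rw [Finset.coe_preimage]
    exact closure_closure_coe_preimage
  obtain ⟨T', hT'B, hT', hcard⟩ := exists_closure_eq_card_add_le_of_index_eq_prime hB hS'
  refine ⟨T'.image C.subtype, ?_, ?_, ?_⟩
  · rw [Finset.coe_image]
    rintro - ⟨x, hx, rfl⟩
    exact hT'B hx
  · rw [Finset.coe_image, ← MonoidHom.map_closure, hT', subgroupOf_map_subtype]
  · have hS'S : S'.card ≤ S.card := Finset.card_le_card_of_injOn C.subtype
      (fun x hx => Finset.mem_preimage.mp hx) C.subtype_injective.injOn
    have := Finset.card_image_le (s := T') (f := C.subtype)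
    have := Nat.mul_le_mul_left p hS'S
    omega

theorem IsPGroup.exists_le_normal_index_eq_prime [Finite A] (hA : IsPGroup p A) {K : Subgroup A}
    (hK : K ≠ ⊤) : ∃ M : Subgroup A, K ≤ M ∧ M.Normal ∧ M.index = p := by
  obtain ⟨M, hM, hKM⟩ := (eq_top_or_exists_le_coatom K).resolve_left hK
  have := hA.isNilpotent
  have hMn : M.Normal :=
    NormalizerCondition.normal_of_coatom M Group.normalizerCondition_of_isNilpotent hM
  refine ⟨M, hKM, hMn, ?_⟩
  have hdvd : p ∣ Nat.card (A ⧸ M) := by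
    refine ((hA.to_quotient M).card_eq_or_dvd).resolve_left fun h => hM.1 ?_
    rwa [← index_eq_card, index_eq_one] at h
  obtain ⟨g, hg⟩ := exists_prime_orderOf_dvd_card' p hdvd
  have hg_top : zpowers g = ⊤ := by
    have hle : M ≤ (zpowers g).comap (QuotientGroup.mk' M) := fun x hx => by
      simp [(QuotientGroup.eq_one_iff x).mpr hx]
    have hne : M ≠ (zpowers g).comap (QuotientGroup.mk' M) := fun heq => by
      obtain ⟨x, rfl⟩ := QuotientGroup.mk'_surjective M g
      have hx : x ∈ M := heq ▸ mem_zpowers (QuotientGroup.mk' M x)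
      rw [QuotientGroup.mk'_apply, (QuotientGroup.eq_one_iff x).mpr hx, orderOf_one] at hg
      exact hp.out.ne_one hg.symm
    have := congrArg (Subgroup.map (QuotientGroup.mk' M)) (hM.2 _ (hle.lt_of_ne hne))
    rwa [Subgroup.map_comap_eq_self_of_surjective (QuotientGroup.mk'_surjective M),
      Subgroup.map_top_of_surjective _ (QuotientGroup.mk'_surjective M)] at this
  rw [index_eq_card, ← card_top (G := A ⧸ M), ← hg_top, Nat.card_zpowers, hg]

theorem exists_le_normal_index_eq_prime_of_le {D K : Subgroup A} [D.Normal] [Finite (A ⧸ D)]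
    (hD : IsPGroup p (A ⧸ D)) (hDK : D ≤ K) (hK : K ≠ ⊤) :
    ∃ M : Subgroup A, K ≤ M ∧ M.Normal ∧ M.index = p := by
  have hKD : K.map (QuotientGroup.mk' D) ≠ ⊤ := fun h => hK <| by
    simpa [comap_map_eq, sup_eq_left.mpr hDK] using
      congrArg (Subgroup.comap (QuotientGroup.mk' D)) h
  obtain ⟨M, hKM, hMn, hMp⟩ := hD.exists_le_normal_index_eq_prime hKD
  exact ⟨M.comap (QuotientGroup.mk' D), map_le_iff_le_comap.mp hKM, hMn.comap _,
    by rw [index_comap_of_surjective _ (QuotientGroup.mk'_surjective D), hMp]⟩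

end PGroup

namespace Subgroup

variable {G : Type*} [Group G]

theorem exists_surjective_quotient_sup (H N : Subgroup G) [N.Normal] :
    ∃ f : N → ↥(H ⊔ N) ⧸ H.subgroupOf (H ⊔ N),
      Function.Surjective f ∧ (H ⊓ N = ⊥ → Function.Injective f) := by
  refine ⟨fun n => QuotientGroup.mk ⟨n, mem_sup_right n.2⟩, ?_, ?_⟩
  · refine QuotientGroup.mk_surjective.forall.mpr fun x => ?_
    have hx : (x : G) ∈ ((N ⊔ H : Subgroup G) : Set G) := sup_comm H N ▸ x.2
    obtain ⟨n, hn, h, hh, hnh⟩ := normal_mul N H ▸ hx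
    refine ⟨⟨n, hn⟩, QuotientGroup.eq.mpr ?_⟩
    simpa [mem_subgroupOf, ← hnh] using hh
  · intro hHN n₁ n₂ h
    have h₁ : (n₁ : G)⁻¹ * n₂ ∈ H := (QuotientGroup.eq (s := H.subgroupOf (H ⊔ N))).mp h
    have h₂ : (n₁ : G)⁻¹ * n₂ ∈ H ⊓ N := ⟨h₁, N.mul_mem (N.inv_mem n₁.2) n₂.2⟩
    rw [hHN, mem_bot, inv_mul_eq_one] at h₂
    exact Subtype.ext h₂

theorem relIndex_sup_le_card (H N : Subgroup G) [N.Normal] [Finite N] :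
    H.relIndex (H ⊔ N) ≤ Nat.card N := by
  obtain ⟨f, hf, -⟩ := exists_surjective_quotient_sup H N
  exact Nat.card_le_card_of_surjective f hf

theorem relIndex_sup_eq_card {H N : Subgroup G} [N.Normal] (hHN : H ⊓ N = ⊥) :
    H.relIndex (H ⊔ N) = Nat.card N := by
  obtain ⟨f, hf, hinj⟩ := exists_surjective_quotient_sup H N
  exact (Nat.card_eq_of_bijective f ⟨hinj hHN, hf⟩).symm

theorem index_map_mk' (H N : Subgroup G) [N.Normal] :
    (H.map (QuotientGroup.mk' N)).index = (H ⊔ N).index := by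
  rw [index_map, QuotientGroup.ker_mk', (QuotientGroup.mk' N).range_eq_top_of_surjective
    (QuotientGroup.mk'_surjective N), index_top, mul_one]

end Subgroup

def OpenNormalSubgroupsHavePPowIndex (p : ℕ) (X : Type*) [Group X] [TopologicalSpace X] : Prop :=
  ∀ U : Subgroup X, U.Normal → IsOpen (U : Set X) → ∃ n : ℕ, U.index = p ^ n

def TopGenerates {X : Type*} [Group X] [TopologicalSpace X] (S : Finset X) (H : Subgroup X) :
    Prop :=
  (S : Set X) ⊆ H ∧ closure (Subgroup.closure (S : Set X) : Set X) = H

noncomputable def rankRatio {X : Type*} [Group X] [TopologicalSpace X] (H : Subgroup X) : ℝ :=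
  ((topRank H : ℝ) - 1) / H.index

section TopologicalGroup

variable {X : Type*} [Group X] [TopologicalSpace X]

theorem topRank_le_card_s13 {H : Subgroup X} {S : Finset X} (hS : TopGenerates S H) :
    topRank H ≤ S.card :=
  Nat.sInf_le ⟨S, rfl, hS⟩

theorem TopFG.exists_topGenerates_card_eq {H : Subgroup X} (hH : TopFG H) :
    ∃ S : Finset X, TopGenerates S H ∧ S.card = topRank H := by
  obtain ⟨S, hS⟩ := hH
  obtain ⟨T, hT, hTS⟩ :=
    Nat.sInf_mem (s := {n | ∃ S : Finset X, S.card = n ∧ TopGenerates S H}) ⟨S.card, S, rfl, hS⟩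
  exact ⟨T, hTS, hT⟩

theorem one_le_topRank [T1Space X] {H : Subgroup X} (hH : TopFG H) (hbot : H ≠ ⊥) :
    1 ≤ topRank H := by
  obtain ⟨S, hS, hcard⟩ := hH.exists_topGenerates_card_eq
  refine Nat.one_le_iff_ne_zero.mpr fun h0 => hbot (SetLike.coe_injective ?_)
  rw [← hS.2, Finset.card_eq_zero.mp (hcard.trans h0)]
  simp

theorem neg_one_le_rankRatio (H : Subgroup X) : -1 ≤ rankRatio H := by
  rcases Nat.eq_zero_or_pos H.index with h | h
  · simp [rankRatio, h]
  · have : (1 : ℝ) ≤ H.index := by exact_mod_cast h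
    rw [rankRatio, le_div_iff₀ (by positivity)]
    nlinarith [(topRank H).cast_nonneg (α := ℝ)]

theorem rankGradient_le_rankRatio {H : Subgroup X} (hH : IsOpen (H : Set X)) :
    rankGradient X ≤ rankRatio H :=
  csInf_le ⟨-1, by rintro _ ⟨K, -, rfl⟩; exact neg_one_le_rankRatio K⟩ ⟨H, hH, rfl⟩

theorem le_rankGradient {a : ℝ} (h : ∀ H : Subgroup X, IsOpen (H : Set X) → a ≤ rankRatio H) :
    a ≤ rankGradient X :=
  le_csInf ⟨_, ⊤, isOpen_univ, rfl⟩ (by rintro _ ⟨H, hH, rfl⟩; exact h H hH)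

theorem OpenNormalSubgroupsHavePPowIndex.of_surjective {Y : Type*} [Group Y] [TopologicalSpace Y]
    {p : ℕ} (hP : OpenNormalSubgroupsHavePPowIndex p X) {f : X →* Y} (hf : Continuous f)
    (hsurj : Function.Surjective f) : OpenNormalSubgroupsHavePPowIndex p Y := fun U hU hUo => by
  simpa [Subgroup.index_comap_of_surjective U hsurj] using hP _ (hU.comap f) (hUo.preimage hf)

section Map

variable {Y : Type*} [Group Y] [TopologicalSpace Y] [CompactSpace X] [T2Space Y] {f : X →* Y}

theorem TopGenerates.map [DecidableEq Y] (hf : Continuous f) {H : Subgroup X} {S : Finset X}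
    (hS : TopGenerates S H) : TopGenerates (S.image f) (H.map f) := by
  refine ⟨?_, ?_⟩
  · rw [Finset.coe_image, Subgroup.coe_map]
    exact Set.image_mono hS.1
  · rw [Finset.coe_image, ← MonoidHom.map_closure, Subgroup.coe_map, Subgroup.coe_map,
      hf.isClosedMap.closure_image_eq_of_continuous hf, hS.2]

theorem TopFG.map (hf : Continuous f) {H : Subgroup X} (hH : TopFG H) : TopFG (H.map f) := by
  classical
  obtain ⟨S, hS⟩ := hH
  exact ⟨_, TopGenerates.map hf hS⟩

theorem topRank_map_le (hf : Continuous f) {H : Subgroup X} (hH : TopFG H) :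
    topRank (H.map f) ≤ topRank H := by
  classical
  obtain ⟨S, hS, hcard⟩ := hH.exists_topGenerates_card_eq
  exact (topRank_le_card_s13 (TopGenerates.map hf hS)).trans (hcard ▸ Finset.card_image_le)

theorem topRank_map_eq (hf : Continuous f) {K : Subgroup X} (hKc : IsClosed (K : Set X))
    (hK : K ⊓ f.ker = ⊥) (hfg : TopFG K) : topRank (K.map f) = topRank K := by
  classical
  refine le_antisymm (topRank_map_le hf hfg) ?_
  have hinj : Set.InjOn f K := fun x hx y hy hxy => by
    have : x⁻¹ * y ∈ K ⊓ f.ker := ⟨K.mul_mem (K.inv_mem hx) hy, by simp [hxy]⟩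
    rwa [hK, Subgroup.mem_bot, inv_mul_eq_one] at this
  obtain ⟨T, hT, hcard⟩ := (hfg.map hf).exists_topGenerates_card_eq
  obtain ⟨T', hT'K, rfl⟩ := Finset.subset_set_image_iff.mp hT.1
  set M := closure (Subgroup.closure (T' : Set X) : Set X)
  have hMK : M ⊆ K := closure_minimal ((Subgroup.closure_le K).mpr hT'K) hKc
  have hfM : f '' M = f '' K := by
    rw [← Subgroup.coe_map, ← hT.2, Finset.coe_image, ← MonoidHom.map_closure, Subgroup.coe_map,
      hf.isClosedMap.closure_image_eq_of_continuous hf]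
  rw [← hcard, Finset.card_image_of_injOn (hinj.mono hT'K)]
  exact topRank_le_card_s13 ⟨hT'K, (hinj.image_eq_image_iff hMK le_rfl).mp hfM⟩

end Map

variable [IsTopologicalGroup X]

theorem Subgroup.finiteIndex_of_isOpen [CompactSpace X] {K : Subgroup X}
    (hK : IsOpen (K : Set X)) : K.FiniteIndex :=
  have := K.quotient_finite_of_isOpen hK
  K.finiteIndex_of_finite_quotient

theorem Subgroup.ne_bot_of_isOpen [CompactSpace X] [Infinite X] {K : Subgroup X}
    (hK : IsOpen (K : Set X)) : K ≠ ⊥ := fun h => by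
  have := (Subgroup.finiteIndex_of_isOpen hK).index_ne_zero
  rw [h, Subgroup.index_bot, Nat.card_eq_zero_of_infinite] at this
  exact this rfl

theorem exists_isOpen_inf_eq_bot [CompactSpace X] [T1Space X] [TotallyDisconnectedSpace X]
    {N : Subgroup X} (hN : (N : Set X).Finite) :
    ∃ U : Subgroup X, IsOpen (U : Set X) ∧ U ⊓ N = ⊥ := by
  obtain ⟨U, hU⟩ := ProfiniteGrp.exist_openNormalSubgroup_sub_open_nhds_of_one
    (hN.sdiff (t := {1})).isClosed.isOpen_compl (by simp)
  refine ⟨U, U.isOpen, eq_bot_iff.mpr fun x hx => ?_⟩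
  by_contra h
  exact hU hx.1 ⟨hx.2, h⟩

section Schreier

variable {p : ℕ} [hp : Fact p.Prime]

theorem TopGenerates.exists_of_relIndex_eq_prime {K H : Subgroup X} {S : Finset X}
    (hS : TopGenerates S H) (hKH : K ≤ H) (hKo : IsOpen (K : Set X)) [(K.subgroupOf H).Normal]
    (hK : K.relIndex H = p) : ∃ T : Finset X, TopGenerates T K ∧ T.card + p ≤ p * S.card + 1 := by
  set A := Subgroup.closure (S : Set X)
  have hAH : A ≤ H := (Subgroup.closure_le H).mpr hS.1
  set ψ : A →* H ⧸ K.subgroupOf H := (QuotientGroup.mk' _).comp (Subgroup.inclusion hAH)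
  -- `A` is dense in `H` and the cosets of `K` are open, so `A` meets every coset
  have hψ : Function.Surjective ψ := by
    refine QuotientGroup.mk_surjective.forall.mpr fun x => ?_
    have hx : (x : X) ∈ closure (A : Set X) := hS.2 ▸ x.2
    obtain ⟨a, hax, haA⟩ := mem_closure_iff.mp hx {y | y⁻¹ * x ∈ K}
      (hKo.preimage (by fun_prop)) (by simp)
    exact ⟨⟨a, haA⟩, QuotientGroup.eq.mpr hax⟩
  have hker : ψ.ker = K.subgroupOf A := by
    ext a
    simp [ψ, QuotientGroup.eq_one_iff, Subgroup.mem_subgroupOf]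
  have : (K.subgroupOf A).Normal := hker ▸ ψ.normal_ker
  have hKA : K.relIndex A = p := by
    rw [Subgroup.relIndex, ← hker, Subgroup.index_ker, ψ.range_eq_top_of_surjective hψ,
      Subgroup.card_top, ← Subgroup.index_eq_card]
    exact hK
  obtain ⟨T, hTK, hT, hcard⟩ := exists_closure_eq_inf_card_add_le_of_relIndex_eq_prime S hKA
  refine ⟨T, ⟨hTK, ?_⟩, hcard⟩
  rw [hT, Subgroup.coe_inf]
  refine (closure_minimal Set.inter_subset_left (K.isClosed_of_isOpen hKo)).antisymm ?_
  exact fun x hx => hKo.inter_closure ⟨hx, hS.2.symm ▸ hKH hx⟩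

variable [CompactSpace X]

theorem exists_le_le_relIndex_eq_prime (hP : OpenNormalSubgroupsHavePPowIndex p X)
    {K H : Subgroup X} (hKo : IsOpen (K : Set X)) (hKH : K ≤ H) (hne : K ≠ H) :
    ∃ M : Subgroup X, K ≤ M ∧ M ≤ H ∧ (M.subgroupOf H).Normal ∧ M.relIndex H = p := by
  have := Subgroup.finiteIndex_of_isOpen hKo
  have hDo : IsOpen (K.normalCore : Set X) := K.normalCore.isOpen_of_isClosed_of_finiteIndex
    (K.normalCore_isClosed (K.isClosed_of_isOpen hKo))
  obtain ⟨n, hn⟩ := hP _ K.normalCore_normal hDo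
  have hD : IsPGroup p (H ⧸ K.normalCore.subgroupOf H) :=
    IsPGroup.of_card_dvd_pow (n := n) <| by
      rw [← Subgroup.index_eq_card, ← hn]
      exact Subgroup.relIndex_dvd_index_of_normal _ _
  obtain ⟨L, hKL, hLn, hLp⟩ := exists_le_normal_index_eq_prime_of_le hD
    (Subgroup.subgroupOf_mono _ K.normalCore_le)
    (fun h => hne (le_antisymm hKH (Subgroup.subgroupOf_eq_top.mp h)))
  have hL : (L.map H.subtype).subgroupOf H = L :=
    Subgroup.comap_map_eq_self_of_injective H.subtype_injective L
  refine ⟨L.map H.subtype, fun x hx => ⟨⟨x, hKH hx⟩, hKL hx, rfl⟩, Subgroup.map_subtype_le L,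
    by rwa [hL], ?_⟩
  rw [Subgroup.relIndex, hL, hLp]

theorem TopGenerates.exists_of_isOpen (hP : OpenNormalSubgroupsHavePPowIndex p X)
    {K H : Subgroup X} {S : Finset X} (hS : TopGenerates S H) (hKH : K ≤ H)
    (hKo : IsOpen (K : Set X)) :
    ∃ T : Finset X, TopGenerates T K ∧ T.card + K.relIndex H ≤ K.relIndex H * S.card + 1 := by
  have := Subgroup.finiteIndex_of_isOpen hKo
  induction h : K.relIndex H using Nat.strong_induction_on generalizing H S with
  | _ n ih =>
  rcases eq_or_ne K H with rfl | hne
  · obtain rfl : 1 = n := Subgroup.relIndex_self K ▸ h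
    exact ⟨S, hS, by omega⟩
  obtain ⟨M, hKM, hMH, hMn, hMp⟩ := exists_le_le_relIndex_eq_prime hP hKo hKH hne
  obtain ⟨SM, hSM, hSMcard⟩ :=
    hS.exists_of_relIndex_eq_prime hMH (Subgroup.isOpen_mono hKM hKo) hMp
  have hn : K.relIndex M * p = n := by
    rw [← hMp, Subgroup.relIndex_mul_relIndex K M H hKM hMH, h]
  have hm : K.relIndex M < n := hn ▸ lt_mul_of_one_lt_right
    (Nat.pos_of_ne_zero Subgroup.isFiniteRelIndex_of_finiteIndex.relIndex_ne_zero) hp.out.one_lt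
  obtain ⟨T, hT, hTcard⟩ := ih _ hm hSM hKM rfl
  refine ⟨T, hT, ?_⟩
  have := Nat.mul_le_mul_left (K.relIndex M) hSMcard
  rw [← hn]
  nlinarith

theorem TopFG.of_isOpen (hP : OpenNormalSubgroupsHavePPowIndex p X)
    (htop : TopFG (⊤ : Subgroup X)) {K : Subgroup X} (hKo : IsOpen (K : Set X)) : TopFG K := by
  obtain ⟨S, hS⟩ := htop
  obtain ⟨T, hT, -⟩ := TopGenerates.exists_of_isOpen hP hS le_top hKo
  exact ⟨T, hT⟩

theorem topRank_sub_one_le (hP : OpenNormalSubgroupsHavePPowIndex p X) {K H : Subgroup X}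
    (hH : TopFG H) (hKH : K ≤ H) (hKo : IsOpen (K : Set X)) :
    (topRank K : ℝ) - 1 ≤ K.relIndex H * ((topRank H : ℝ) - 1) := by
  obtain ⟨S, hS, hcard⟩ := hH.exists_topGenerates_card_eq
  obtain ⟨T, hT, hTcard⟩ := hS.exists_of_isOpen hP hKH hKo
  have : (topRank K : ℝ) + K.relIndex H ≤ K.relIndex H * topRank H + 1 := by
    rw [← hcard]
    exact_mod_cast (Nat.add_le_add_right (topRank_le_card_s13 hT) _).trans hTcard
  linarith

theorem rankRatio_le_of_le (hP : OpenNormalSubgroupsHavePPowIndex p X) {K H : Subgroup X}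
    (hH : TopFG H) (hKH : K ≤ H) (hKo : IsOpen (K : Set X)) : rankRatio K ≤ rankRatio H := by
  have := Subgroup.finiteIndex_of_isOpen hKo
  have hm : (0 : ℝ) < K.relIndex H := by
    exact_mod_cast Nat.pos_of_ne_zero Subgroup.isFiniteRelIndex_of_finiteIndex.relIndex_ne_zero
  have hH0 : (0 : ℝ) < H.index := by
    exact_mod_cast Nat.pos_of_ne_zero (Subgroup.finiteIndex_of_le hKH).index_ne_zero
  rw [rankRatio, rankRatio, ← Subgroup.relIndex_mul_index hKH, Nat.cast_mul,
    ← mul_div_mul_left _ (H.index : ℝ) hm.ne']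
  exact div_le_div_of_nonneg_right (topRank_sub_one_le hP hH hKH hKo) (by positivity)

end Schreier

end TopologicalGroup
section Quotient

variable {G : Type*} [Group G] [TopologicalSpace G] [IsTopologicalGroup G] [CompactSpace G]
  [T2Space G] {N : Subgroup G} [N.Normal]

theorem rankRatio_map_mk'_le [Infinite G] (hN : (N : Set G).Finite) {H : Subgroup G}
    (hHo : IsOpen (H : Set G)) (hH : TopFG H) :
    rankRatio (H.map (QuotientGroup.mk' N)) ≤ Nat.card N * rankRatio H := by
  have : IsClosed (N : Set G) := hN.isClosed
  have := hN.to_subtype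
  have hd : topRank (H.map (QuotientGroup.mk' N)) ≤ topRank H :=
    topRank_map_le QuotientGroup.continuous_mk hH
  have hd1 : 1 ≤ topRank H := one_le_topRank hH (Subgroup.ne_bot_of_isOpen hHo)
  have hr : H.relIndex (H ⊔ N) ≤ Nat.card N := H.relIndex_sup_le_card N
  have := Subgroup.finiteIndex_of_isOpen hHo
  have hJ : (0 : ℝ) < (H ⊔ N).index := by
    exact_mod_cast Nat.pos_of_ne_zero (Subgroup.finiteIndex_of_le le_sup_left).index_ne_zero
  have hr0 : (0 : ℝ) < H.relIndex (H ⊔ N) := by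
    exact_mod_cast Nat.pos_of_ne_zero Subgroup.isFiniteRelIndex_of_finiteIndex.relIndex_ne_zero
  rw [rankRatio, rankRatio, Subgroup.index_map_mk',
    ← Subgroup.relIndex_mul_index (le_sup_left : H ≤ H ⊔ N), Nat.cast_mul, mul_div_assoc',
    div_le_div_iff₀ hJ (by positivity)]
  have hd1' : (0 : ℝ) ≤ topRank H - 1 := by
    rw [sub_nonneg]; exact_mod_cast hd1
  calc _ ≤ ((topRank H : ℝ) - 1) * (H.relIndex (H ⊔ N) * (H ⊔ N).index) := by gcongr
    _ ≤ _ := by rw [mul_comm (Nat.card N : ℝ), mul_assoc]; gcongr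

theorem mul_rankRatio_eq_rankRatio_map_mk' (hN : (N : Set G).Finite) {K : Subgroup G}
    (hKo : IsOpen (K : Set G)) (hK : TopFG K) (hKN : K ⊓ N = ⊥) :
    Nat.card N * rankRatio K = rankRatio (K.map (QuotientGroup.mk' N)) := by
  have : IsClosed (N : Set G) := hN.isClosed
  have := hN.to_subtype
  have hd : topRank (K.map (QuotientGroup.mk' N)) = topRank K :=
    topRank_map_eq QuotientGroup.continuous_mk (K.isClosed_of_isOpen hKo)
      (by rwa [QuotientGroup.ker_mk']) hK
  have hc : (0 : ℝ) < Nat.card N := by exact_mod_cast Nat.card_pos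
  rw [rankRatio, rankRatio, hd, Subgroup.index_map_mk', ← Subgroup.relIndex_mul_index le_sup_left,
    Subgroup.relIndex_sup_eq_card hKN, Nat.cast_mul, mul_div_assoc', mul_div_mul_left _ _ hc.ne']

variable {p : ℕ} [Fact p.Prime]

theorem rankGradient_quotient_le [Infinite G] (hP : OpenNormalSubgroupsHavePPowIndex p G)
    (hfg : TopFG (⊤ : Subgroup G)) (hN : (N : Set G).Finite) :
    rankGradient (G ⧸ N) ≤ Nat.card N * rankGradient G := by
  have := hN.to_subtype
  have hc : (0 : ℝ) < Nat.card N := by exact_mod_cast Nat.card_pos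
  rw [← div_le_iff₀' hc]
  refine le_rankGradient fun H hHo => ?_
  rw [div_le_iff₀' hc]
  have hQo : IsOpen (H.map (QuotientGroup.mk' N) : Set (G ⧸ N)) := by
    rw [Subgroup.coe_map]
    exact QuotientGroup.isOpenMap_coe _ hHo
  exact (rankGradient_le_rankRatio hQo).trans (rankRatio_map_mk'_le hN hHo (hfg.of_isOpen hP hHo))

theorem mul_rankGradient_le_quotient [TotallyDisconnectedSpace G]
    (hP : OpenNormalSubgroupsHavePPowIndex p G) (hfg : TopFG (⊤ : Subgroup G))
    (hN : (N : Set G).Finite) : Nat.card N * rankGradient G ≤ rankGradient (G ⧸ N) := by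
  have : IsClosed (N : Set G) := hN.isClosed
  have hPQ := hP.of_surjective QuotientGroup.continuous_mk (QuotientGroup.mk'_surjective N)
  have hfgQ : TopFG (⊤ : Subgroup (G ⧸ N)) := by
    simpa [Subgroup.map_top_of_surjective _ (QuotientGroup.mk'_surjective N)] using
      hfg.map (f := QuotientGroup.mk' N) QuotientGroup.continuous_mk
  obtain ⟨U, hUo, hUN⟩ := exists_isOpen_inf_eq_bot hN
  refine le_rankGradient fun Q hQo => ?_
  set K := Q.comap (QuotientGroup.mk' N) ⊓ U
  have hKo : IsOpen (K : Set G) := (hQo.preimage QuotientGroup.continuous_mk).inter hUo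
  have hKN : K ⊓ N = ⊥ := eq_bot_iff.mpr fun x hx => hUN ▸ ⟨hx.1.2, hx.2⟩
  have hKQo : IsOpen (K.map (QuotientGroup.mk' N) : Set (G ⧸ N)) := by
    rw [Subgroup.coe_map]
    exact QuotientGroup.isOpenMap_coe _ hKo
  calc Nat.card N * rankGradient G ≤ Nat.card N * rankRatio K := by
        gcongr; exact rankGradient_le_rankRatio hKo
    _ = rankRatio (K.map (QuotientGroup.mk' N)) :=
        mul_rankRatio_eq_rankRatio_map_mk' hN hKo (hfg.of_isOpen hP hKo) hKN
    _ ≤ rankRatio Q := rankRatio_le_of_le hPQ (hfgQ.of_isOpen hPQ hQo)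
        (Subgroup.map_le_iff_le_comap.mpr inf_le_left) hKQo

end Quotient

/-- **Lemma.** Let `G` be a finitely generated infinite pro-`p` group and `N ⊴ G` a finite
normal subgroup. Then `RG(G/N) = |N| · RG(G)`. -/
theorem statement13 (p : ℕ) (hp : p.Prime) (G : Type*) [Group G] [TopologicalSpace G]
    [IsTopologicalGroup G] (hG : IsProPGroup p G) (hfg : TopFG (⊤ : Subgroup G))
    (hinf : Infinite G) (N : Subgroup G) (hN : N.Normal) (hNfin : (N : Set G).Finite) :
    quotientRankGradient N hN = (Nat.card N : ℝ) * rankGradient G := by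
  have := Fact.mk hp
  obtain ⟨_, _, _, hP⟩ := hG
  exact le_antisymm (rankGradient_quotient_le hP hfg hNfin)
    (mul_rankGradient_le_quotient hP hfg hNfin)
end
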